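/- (Submodular version of the main theorem.) Assume 1 ≥ b_1 ≥ … ≥ b_m ≥ 0 and let f : 𝓛^n → ℝ be fibrewise submodular (i.e. −f is fibrewise supermodular). Then (i) for every x ∈ M_n(b), E_x(f) ≥ E_{(q*)^{⊗n}}(f), so the minimum of E_x(f) over M_n(b) equals E_{(q*)^{⊗n}}(f); and (ii) if in addition Σ_{i=1}^m b_i ≤ 1, then for every x ∈ M_n(b), E_x(f) ≤ E_{(q_*)^{⊗n}}(f), so the maximum equals E_{(q_*)^{⊗n}}(f). -/
import Mathlib


noncomputable section

open Finset

/-- `ℓ_i` : indicator of `i ∈ S`. -/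
def ell {m : ℕ} (i : Fin m) (S : Finset (Fin m)) : ℝ := if i ∈ S then 1 else 0

/-- `μ_j = {1,…,j}` (the first `j` elements of `Fin m`). -/
def mu (m j : ℕ) : Finset (Fin m) := Finset.univ.filter fun i => (i : ℕ) < j

/-- paper `b_j` for `j = 0,…,m`, with `b_0 = 1` (and `0` beyond `m`). -/
def bpaper {m : ℕ} (b : Fin m → ℝ) (j : ℕ) : ℝ :=
  if j = 0 then 1 else if h : j - 1 < m then b ⟨j - 1, h⟩ else 0

/-- the upper supermodular vertex measure `q*`:
`q*(μ_j) = b_j − b_{j+1}` for `0 ≤ j ≤ m−1`, `q*(μ_m) = b_m`, and `q* = 0` elsewhere. -/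
def qStar {m : ℕ} (b : Fin m → ℝ) (S : Finset (Fin m)) : ℝ :=
  ∑ j ∈ Finset.range (m + 1), if S = mu m j then bpaper b j - bpaper b (j + 1) else 0

/-- the lower supermodular vertex measure `q_*`:
`q_*(∅) = 1 − Σᵢ bᵢ`, `q_*({i}) = bᵢ`, and `q_* = 0` elsewhere. -/
def qLow {m : ℕ} (b : Fin m → ℝ) (S : Finset (Fin m)) : ℝ :=
  if S = ∅ then 1 - ∑ i, b i else ∑ i : Fin m, if S = {i} then b i else 0

/-- membership in `M_1(b)`: a probability function with `E_x(ℓ_i) = b_i` for all `i`. -/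
def MemM1 {m : ℕ} (b : Fin m → ℝ) (x : Finset (Fin m) → ℝ) : Prop :=
  (∀ S, 0 ≤ x S) ∧ (∑ S, x S = 1) ∧ (∀ i, ∑ S, ell i S * x S = b i)

/-- membership in `M_n(b)`: a probability function on `𝓛^n` satisfying, for every step `k`,
every prefix `λ` and every `i`, the conditional moment condition. -/
def MemMn {m n : ℕ} (b : Fin m → ℝ) (x : (Fin n → Finset (Fin m)) → ℝ) : Prop :=
  (∀ ω, 0 ≤ x ω) ∧ (∑ ω, x ω = 1) ∧
  (∀ (k : Fin n) (lam : Fin n → Finset (Fin m)) (i : Fin m),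
    (∑ ω, if ∀ j : Fin n, j < k → ω j = lam j then ell i (ω k) * x ω else 0) =
      b i * ∑ ω, if ∀ j : Fin n, j < k → ω j = lam j then x ω else 0)

/-- supermodular function on `𝓛`. -/
def Supermod {m : ℕ} (f : Finset (Fin m) → ℝ) : Prop :=
  ∀ S T, f S + f T ≤ f (S ∪ T) + f (S ∩ T)

/-- fibrewise supermodular function on `𝓛^n`. -/
def FibSupermod {m n : ℕ} (f : (Fin n → Finset (Fin m)) → ℝ) : Prop :=
  ∀ (k : Fin n) (lam : Fin n → Finset (Fin m)),
    Supermod fun S => f (Function.update lam k S)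

/-- the product measure `q^{⊗n}`. -/
def prodM {m n : ℕ} (q : Finset (Fin m) → ℝ) (ω : Fin n → Finset (Fin m)) : ℝ :=
  ∏ k, q (ω k)

lemma mem_mu {m j : ℕ} {i : Fin m} : i ∈ mu m j ↔ (i : ℕ) < j := by simp [mu]

lemma mu_zero {m : ℕ} : mu m 0 = ∅ := by simp [mu]

lemma mu_top {m : ℕ} : mu m m = univ := by
  ext i; simp [mu, i.isLt]

lemma bpaper_zero {m : ℕ} (b : Fin m → ℝ) : bpaper b 0 = 1 := by simp [bpaper]

lemma bpaper_succ {m : ℕ} (b : Fin m → ℝ) {j : ℕ} (h : j < m) :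
    bpaper b (j + 1) = b ⟨j, h⟩ := by simp [bpaper, h]

lemma bpaper_top {m : ℕ} (b : Fin m → ℝ) : bpaper b (m + 1) = 0 := by
  simp [bpaper]

-- Abel summation identity

lemma abel_id (d G : ℕ → ℝ) (N : ℕ) :
    ∑ j ∈ Finset.range (N + 1), (d j - d (j + 1)) * G j
      = d 0 * G 0 - d (N + 1) * G N + ∑ j ∈ Finset.range N, d (j + 1) * (G (j + 1) - G j) := by
  induction N with
  | zero => simp; ring
  | succ N ih =>
      rw [Finset.sum_range_succ, ih, Finset.sum_range_succ]
      ring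

lemma sum_qStar_mul {m : ℕ} (b : Fin m → ℝ) (g : Finset (Fin m) → ℝ) :
    ∑ S, g S * qStar b S
      = ∑ j ∈ Finset.range (m + 1), (bpaper b j - bpaper b (j + 1)) * g (mu m j) := by
  unfold qStar
  simp_rw [Finset.mul_sum, mul_ite, mul_zero]
  rw [Finset.sum_comm]
  refine Finset.sum_congr rfl fun j _ => ?_
  rw [Finset.sum_ite_eq' univ (mu m j) (fun S => g S * (bpaper b j - bpaper b (j + 1)))]
  simp [mul_comm]

lemma bpaper_nonneg_diff {m : ℕ} (hm : 0 < m) (b : Fin m → ℝ)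
    (hmono : ∀ i j : Fin m, i ≤ j → b j ≤ b i)
    (hb1 : ∀ i, b i ≤ 1) (hb0 : ∀ i, 0 ≤ b i) {j : ℕ} (hj : j < m + 1) :
    0 ≤ bpaper b j - bpaper b (j + 1) := by
  rcases Nat.eq_zero_or_pos j with rfl | hj0
  · rw [bpaper_zero, bpaper_succ b hm]
    linarith [hb1 ⟨0, hm⟩]
  · have hj1 : j - 1 < m := by omega
    have hjm : j ≤ m := by omega
    have hbj : bpaper b j = b ⟨j - 1, hj1⟩ := by
      unfold bpaper
      rw [if_neg (by omega : ¬ j = 0), dif_pos hj1]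
    rw [hbj]
    rcases Nat.eq_or_lt_of_le hjm with h | h
    · subst h; rw [bpaper_top]; linarith [hb0 ⟨j-1, hj1⟩]
    · rw [bpaper_succ b h]
      exact sub_nonneg.mpr (hmono _ _ (by simp only [Fin.mk_le_mk]; omega))

lemma qStar_nonneg {m : ℕ} (hm : 0 < m) (b : Fin m → ℝ)
    (hmono : ∀ i j : Fin m, i ≤ j → b j ≤ b i)
    (hb1 : ∀ i, b i ≤ 1) (hb0 : ∀ i, 0 ≤ b i) (S : Finset (Fin m)) :
    0 ≤ qStar b S := by
  refine Finset.sum_nonneg fun j hj => ?_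
  rw [Finset.mem_range] at hj
  split
  · exact bpaper_nonneg_diff hm b hmono hb1 hb0 hj
  · exact le_refl 0

lemma ell_mu {m : ℕ} (i : Fin m) (j : ℕ) : ell i (mu m j) = if (i : ℕ) < j then 1 else 0 := by
  simp [ell, mem_mu]

lemma sum_qStar {m : ℕ} (b : Fin m → ℝ) : ∑ S, qStar b S = 1 := by
  have h := sum_qStar_mul b (fun _ => 1)
  simp only [one_mul, mul_one] at h
  rw [h, Finset.sum_range_sub' (bpaper b), bpaper_zero, bpaper_top, sub_zero]

lemma moment_qStar {m : ℕ} (b : Fin m → ℝ) (i : Fin m) :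
    ∑ S, ell i S * qStar b S = b i := by
  rw [sum_qStar_mul b (ell i)]
  have hterm : ∀ j ∈ Finset.range (m + 1),
      (bpaper b j - bpaper b (j + 1)) * ell i (mu m j)
        = (bpaper b j - bpaper b (j + 1))
            - (if j < (i : ℕ) + 1 then bpaper b j - bpaper b (j + 1) else 0) := by
    intro j _
    rw [ell_mu]
    by_cases h : (i : ℕ) < j
    · rw [if_pos h, if_neg (by omega)]; ring
    · rw [if_neg h, if_pos (by omega)]; ring
  rw [Finset.sum_congr rfl hterm, Finset.sum_sub_distrib, Finset.sum_range_sub' (bpaper b)]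
  have h2 : (∑ j ∈ Finset.range (m + 1),
      if j < (i : ℕ) + 1 then bpaper b j - bpaper b (j + 1) else 0)
        = ∑ j ∈ Finset.range ((i : ℕ) + 1), (bpaper b j - bpaper b (j + 1)) := by
    rw [← Finset.sum_subset (Finset.range_subset_range.mpr (by omega : (i : ℕ) + 1 ≤ m + 1))
      (fun j _ hj => if_neg (by simpa using hj))]
    exact Finset.sum_congr rfl fun j hj => if_pos (Finset.mem_range.mp hj)
  rw [h2, Finset.sum_range_sub' (bpaper b), bpaper_zero, bpaper_top, bpaper_succ b i.isLt]
  simp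

lemma memM1_qStar {m : ℕ} (hm : 0 < m) (b : Fin m → ℝ)
    (hmono : ∀ i j : Fin m, i ≤ j → b j ≤ b i)
    (hb1 : ∀ i, b i ≤ 1) (hb0 : ∀ i, 0 ≤ b i) : MemM1 b (qStar b) :=
  ⟨qStar_nonneg hm b hmono hb1 hb0, sum_qStar b, moment_qStar b⟩

lemma qLow_eq {m : ℕ} (b : Fin m → ℝ) (S : Finset (Fin m)) :
    qLow b S = (if S = ∅ then 1 - ∑ i, b i else 0)
      + ∑ i : Fin m, if S = {i} then b i else 0 := by
  unfold qLow
  by_cases h : S = ∅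
  · subst h
    rw [if_pos rfl, if_pos rfl]
    have : ∀ i : Fin m, (∅ : Finset (Fin m)) ≠ ({i} : Finset (Fin m)) :=
      fun i => (Finset.singleton_ne_empty i).symm
    simp [this]
  · rw [if_neg h, if_neg h, zero_add]

lemma sum_qLow {m : ℕ} (b : Fin m → ℝ) : ∑ S, qLow b S = 1 := by
  simp_rw [qLow_eq, Finset.sum_add_distrib]
  rw [Finset.sum_ite_eq' univ (∅ : Finset (Fin m)) (fun _ => 1 - ∑ i, b i),
    Finset.sum_comm]
  simp_rw [Finset.sum_ite_eq' univ]
  simp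

lemma moment_qLow {m : ℕ} (b : Fin m → ℝ) (i : Fin m) :
    ∑ S, ell i S * qLow b S = b i := by
  simp_rw [qLow_eq, mul_add, Finset.mul_sum, mul_ite, mul_zero, Finset.sum_add_distrib]
  have hswap : (∑ S : Finset (Fin m), ∑ j : Fin m, if S = {j} then ell i S * b j else 0)
      = ∑ j : Fin m, ∑ S : Finset (Fin m), if S = {j} then ell i S * b j else 0 :=
    Finset.sum_comm
  rw [Finset.sum_ite_eq' univ (∅ : Finset (Fin m)) (fun S => ell i S * (1 - ∑ i, b i)), hswap]
  have h1 : ∀ j : Fin m, (∑ S : Finset (Fin m), if S = {j} then ell i S * b j else 0)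
      = if i = j then b j else 0 := by
    intro j
    rw [Finset.sum_ite_eq' univ ({j} : Finset (Fin m)) (fun S => ell i S * b j)]
    by_cases h : i = j <;> simp [ell, h]
  rw [Finset.sum_congr rfl fun j _ => h1 j, Finset.sum_ite_eq univ i b]
  simp [ell]

lemma qLow_nonneg {m : ℕ} (b : Fin m → ℝ) (hb0 : ∀ i, 0 ≤ b i)
    (hsum : ∑ i, b i ≤ 1) (S : Finset (Fin m)) : 0 ≤ qLow b S := by
  unfold qLow
  split
  · linarith
  · exact Finset.sum_nonneg fun i _ => by split <;> [exact hb0 i; exact le_refl 0]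

lemma memM1_qLow {m : ℕ} (b : Fin m → ℝ) (hb0 : ∀ i, 0 ≤ b i)
    (hsum : ∑ i, b i ≤ 1) : MemM1 b (qLow b) :=
  ⟨qLow_nonneg b hb0 hsum, sum_qLow b, moment_qLow b⟩

lemma greedy_upper {m : ℕ} (g : Finset (Fin m) → ℝ) (hg : Supermod g) (S : Finset (Fin m)) :
    g S ≤ g ∅ + ∑ i : Fin m, ell i S * (g (mu m ((i : ℕ) + 1)) - g (mu m (i : ℕ))) := by
  set F : ℕ → ℝ :=
    fun j => if h : j < m then ell ⟨j, h⟩ S * (g (mu m (j + 1)) - g (mu m j)) else 0 with hF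
  have key : ∀ t, t ≤ m → g (S ∩ mu m t) ≤ g ∅ + ∑ j ∈ Finset.range t, F j := by
    intro t
    induction t with
    | zero => intro _; simp [mu_zero]
    | succ t ih =>
        intro ht
        have ht' : t < m := ht
        have ih' := ih (le_of_lt ht')
        rw [Finset.sum_range_succ]
        have hFt : F t = ell ⟨t, ht'⟩ S * (g (mu m (t + 1)) - g (mu m t)) := dif_pos ht'
        by_cases hts : (⟨t, ht'⟩ : Fin m) ∈ S
        · have hU : (S ∩ mu m (t + 1)) ∪ mu m t = mu m (t + 1) := by
            ext a
            simp only [Finset.mem_union, Finset.mem_inter, mem_mu]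
            constructor
            · rintro (⟨_, h⟩ | h)
              · exact h
              · omega
            · intro ha
              by_cases hat : (a : ℕ) < t
              · right; exact hat
              · left
                have haa : a = (⟨t, ht'⟩ : Fin m) := Fin.ext (show (a : ℕ) = t by omega)
                exact ⟨haa ▸ hts, ha⟩
          have hI : (S ∩ mu m (t + 1)) ∩ mu m t = S ∩ mu m t := by
            ext a
            simp only [Finset.mem_inter, mem_mu]
            constructor
            · rintro ⟨⟨h1, _⟩, h3⟩; exact ⟨h1, h3⟩
            · rintro ⟨h1, h2⟩; exact ⟨⟨h1, by omega⟩, h2⟩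
          have hsm := hg (S ∩ mu m (t + 1)) (mu m t)
          rw [hU, hI] at hsm
          have he : ell ⟨t, ht'⟩ S = 1 := if_pos hts
          rw [hFt, he, one_mul]
          linarith
        · have hEq : S ∩ mu m (t + 1) = S ∩ mu m t := by
            ext a
            simp only [Finset.mem_inter, mem_mu]
            constructor
            · rintro ⟨h1, h2⟩
              refine ⟨h1, ?_⟩
              rcases Nat.lt_succ_iff_lt_or_eq.mp h2 with h | h
              · exact h
              · exact absurd ((Fin.ext h : a = ⟨t, ht'⟩) ▸ h1) hts
            · rintro ⟨h1, h2⟩; exact ⟨h1, by omega⟩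
          have he : ell ⟨t, ht'⟩ S = 0 := if_neg hts
          rw [hFt, he, zero_mul, add_zero, hEq]
          exact ih'
  have h := key m le_rfl
  rw [mu_top, Finset.inter_univ] at h
  refine h.trans (le_of_eq ?_)
  congr 1
  rw [← Fin.sum_univ_eq_sum_range F m]
  exact Finset.sum_congr rfl fun i _ => by simp [hF, i.isLt]

lemma greedy_lower {m : ℕ} (g : Finset (Fin m) → ℝ) (hg : Supermod g) (S : Finset (Fin m)) :
    g ∅ + ∑ i : Fin m, ell i S * (g {i} - g ∅) ≤ g S := by
  induction S using Finset.induction_on with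
  | empty => simp [ell]
  | @insert a s ha ih =>
      have hell : ∀ i : Fin m, ell i (insert a s) = ell i s + (if i = a then 1 else 0) := by
        intro i
        unfold ell
        by_cases h : i = a
        · subst h; simp [Finset.mem_insert, ha]
        · simp [Finset.mem_insert, h]
      have hsum : ∑ i : Fin m, ell i (insert a s) * (g {i} - g ∅)
          = (∑ i : Fin m, ell i s * (g {i} - g ∅)) + (g {a} - g ∅) := by
        simp_rw [hell, add_mul, Finset.sum_add_distrib, ite_mul, one_mul, zero_mul]
        rw [Finset.sum_ite_eq' univ a (fun i => g {i} - g ∅)]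
        simp
      have hsup := hg s {a}
      have h1 : s ∪ {a} = insert a s := by
        rw [Finset.union_comm, ← Finset.insert_eq]
      have h2 : s ∩ {a} = ∅ := by
        simp [Finset.inter_singleton_of_notMem ha]
      rw [h1, h2] at hsup
      rw [hsum]
      linarith

lemma step_upper {m : ℕ} (b : Fin m → ℝ)
    (g : Finset (Fin m) → ℝ) (hg : Supermod g) (x : Finset (Fin m) → ℝ) (hx : MemM1 b x) :
    ∑ S, g S * x S ≤ ∑ S, g S * qStar b S := by
  obtain ⟨hx0, hx1, hxm⟩ := hx
  have hupp : ∑ S, g S * x S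
      ≤ g ∅ + ∑ i : Fin m, (g (mu m ((i : ℕ) + 1)) - g (mu m (i : ℕ))) * b i := by
    calc ∑ S, g S * x S
        ≤ ∑ S, (g ∅ + ∑ i : Fin m, ell i S * (g (mu m ((i : ℕ) + 1)) - g (mu m (i : ℕ)))) * x S :=
          Finset.sum_le_sum fun S _ => mul_le_mul_of_nonneg_right (greedy_upper g hg S) (hx0 S)
      _ = g ∅ + ∑ i : Fin m, (g (mu m ((i : ℕ) + 1)) - g (mu m (i : ℕ))) * b i := by
          simp_rw [add_mul, Finset.sum_add_distrib, ← Finset.mul_sum, hx1, mul_one,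
            Finset.sum_mul]
          congr 1
          rw [Finset.sum_comm]
          refine Finset.sum_congr rfl fun i _ => ?_
          rw [← hxm i, Finset.mul_sum]
          exact Finset.sum_congr rfl fun S _ => by ring
  refine hupp.trans (le_of_eq ?_)
  rw [sum_qStar_mul b g, abel_id (bpaper b) (fun j => g (mu m j)) m, bpaper_zero, bpaper_top,
    mu_zero]
  have hr : ∑ j ∈ Finset.range m, bpaper b (j + 1) * (g (mu m (j + 1)) - g (mu m j))
      = ∑ i : Fin m, (g (mu m ((i : ℕ) + 1)) - g (mu m (i : ℕ))) * b i := by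
    rw [← Fin.sum_univ_eq_sum_range
      (fun j => bpaper b (j + 1) * (g (mu m (j + 1)) - g (mu m j))) m]
    exact Finset.sum_congr rfl fun i _ => by rw [bpaper_succ b i.isLt]; simp; ring
  rw [hr]; ring

lemma sum_qLow_mul {m : ℕ} (b : Fin m → ℝ) (g : Finset (Fin m) → ℝ) :
    ∑ S, g S * qLow b S = (1 - ∑ i, b i) * g ∅ + ∑ i : Fin m, b i * g {i} := by
  simp_rw [qLow_eq, mul_add, Finset.mul_sum, mul_ite, mul_zero, Finset.sum_add_distrib]
  have hswap : (∑ S : Finset (Fin m), ∑ j : Fin m, if S = {j} then g S * b j else 0)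
      = ∑ j : Fin m, ∑ S : Finset (Fin m), if S = {j} then g S * b j else 0 :=
    Finset.sum_comm
  rw [Finset.sum_ite_eq' univ (∅ : Finset (Fin m)) (fun S => g S * (1 - ∑ i, b i)), hswap]
  have h1 : ∀ j : Fin m, (∑ S : Finset (Fin m), if S = {j} then g S * b j else 0) = g {j} * b j :=
    fun j => (Finset.sum_ite_eq' univ ({j} : Finset (Fin m)) (fun S => g S * b j)).trans (by simp)
  rw [Finset.sum_congr rfl fun j _ => h1 j]
  simp [mul_comm]

lemma step_lower {m : ℕ} (b : Fin m → ℝ)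
    (g : Finset (Fin m) → ℝ) (hg : Supermod g) (x : Finset (Fin m) → ℝ) (hx : MemM1 b x) :
    ∑ S, g S * qLow b S ≤ ∑ S, g S * x S := by
  obtain ⟨hx0, hx1, hxm⟩ := hx
  have hlow : g ∅ + ∑ i : Fin m, (g {i} - g ∅) * b i ≤ ∑ S, g S * x S := by
    calc g ∅ + ∑ i : Fin m, (g {i} - g ∅) * b i
        = ∑ S, (g ∅ + ∑ i : Fin m, ell i S * (g {i} - g ∅)) * x S := by
          simp_rw [add_mul, Finset.sum_add_distrib, ← Finset.mul_sum, hx1, mul_one,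
            Finset.sum_mul]
          congr 1
          rw [Finset.sum_comm]
          refine Finset.sum_congr rfl fun i _ => ?_
          rw [← hxm i, Finset.mul_sum]
          exact Finset.sum_congr rfl fun S _ => by ring
      _ ≤ ∑ S, g S * x S :=
          Finset.sum_le_sum fun S _ => mul_le_mul_of_nonneg_right (greedy_lower g hg S) (hx0 S)
  refine le_trans (le_of_eq ?_) hlow
  rw [sum_qLow_mul b g]
  have hd : ∑ i : Fin m, (g {i} - g ∅) * b i
      = (∑ i : Fin m, b i * g {i}) - (∑ i : Fin m, b i) * g ∅ := by
    rw [Finset.sum_mul, ← Finset.sum_sub_distrib]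
    exact Finset.sum_congr rfl fun i _ => by ring
  rw [hd]; ring

lemma sum_cons {m n : ℕ} (h : (Fin (n + 1) → Finset (Fin m)) → ℝ) :
    ∑ ω, h ω = ∑ S : Finset (Fin m), ∑ ω' : Fin n → Finset (Fin m), h (Fin.cons S ω') := by
  rw [← (Fin.consEquiv fun _ => Finset (Fin m)).sum_comp h, Fintype.sum_prod_type]
  rfl

lemma prodM_cons {m n : ℕ} (q : Finset (Fin m) → ℝ) (S : Finset (Fin m))
    (ω' : Fin n → Finset (Fin m)) :
    prodM q (Fin.cons S ω') = q S * prodM q ω' := by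
  unfold prodM
  rw [Fin.prod_univ_succ]
  simp

lemma sum_prod_fn {m n : ℕ} (G : Fin n → Finset (Fin m) → ℝ) :
    ∑ ω : Fin n → Finset (Fin m), ∏ k, G k (ω k) = ∏ k, ∑ S, G k S :=
  (Fintype.prod_sum G).symm

lemma factor_ind {m n : ℕ} (q : Finset (Fin m) → ℝ) (k : Fin n) (lam ω : Fin n → Finset (Fin m)) :
    (if ∀ j : Fin n, j < k → ω j = lam j then prodM q ω else 0)
      = ∏ j, ((if j < k → ω j = lam j then (1 : ℝ) else 0) * q (ω j)) := by
  rw [Finset.prod_mul_distrib]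
  by_cases hP : ∀ j : Fin n, j < k → ω j = lam j
  · rw [if_pos hP, Finset.prod_congr rfl (fun j _ => if_pos (hP j)), Finset.prod_const_one,
      one_mul]
    rfl
  · rw [if_neg hP]
    push_neg at hP
    obtain ⟨j0, hj0, hne⟩ := hP
    have h0 : (∏ x : Fin n, if x < k → ω x = lam x then (1 : ℝ) else 0) = 0 :=
      Finset.prod_eq_zero (Finset.mem_univ j0) (if_neg fun himp => hne (himp hj0))
    rw [h0, zero_mul]

lemma factor_ind_ell {m n : ℕ} (q : Finset (Fin m) → ℝ) (k : Fin n) (i : Fin m)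
    (lam ω : Fin n → Finset (Fin m)) :
    (if ∀ j : Fin n, j < k → ω j = lam j then ell i (ω k) * prodM q ω else 0)
      = ∏ j, ((if j < k → ω j = lam j then (1 : ℝ) else 0)
          * (if j = k then ell i (ω j) else 1) * q (ω j)) := by
  rw [Finset.prod_mul_distrib, Finset.prod_mul_distrib,
    Finset.prod_ite_eq' univ k (fun j => ell i (ω j))]
  by_cases hP : ∀ j : Fin n, j < k → ω j = lam j
  · rw [if_pos hP, Finset.prod_congr rfl (fun j _ => if_pos (hP j)), Finset.prod_const_one,
      one_mul]
    simp [prodM]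
  · rw [if_neg hP]
    push_neg at hP
    obtain ⟨j0, hj0, hne⟩ := hP
    have h0 : (∏ x : Fin n, if x < k → ω x = lam x then (1 : ℝ) else 0) = 0 :=
      Finset.prod_eq_zero (Finset.mem_univ j0) (if_neg fun himp => hne (himp hj0))
    rw [h0, zero_mul, zero_mul]

lemma memMn_prodM {m n : ℕ} (b : Fin m → ℝ) (q : Finset (Fin m) → ℝ) (hq : MemM1 b q) :
    MemMn b (prodM (n := n) q) := by
  obtain ⟨hq0, hq1, hqm⟩ := hq
  refine ⟨fun ω => Finset.prod_nonneg fun k _ => hq0 _, ?_, ?_⟩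
  · unfold prodM
    rw [sum_prod_fn (fun _ S => q S)]
    simp [hq1]
  · intro k lam i
    have hL : (∑ ω, if ∀ j : Fin n, j < k → ω j = lam j then ell i (ω k) * prodM q ω else 0)
        = ∏ j : Fin n, ∑ S, ((if j < k → S = lam j then (1 : ℝ) else 0)
            * (if j = k then ell i S else 1) * q S) := by
      rw [Finset.sum_congr rfl (fun ω _ => factor_ind_ell q k i lam ω)]
      exact sum_prod_fn (fun j S => (if j < k → S = lam j then (1 : ℝ) else 0)
        * (if j = k then ell i S else 1) * q S)
    have hR : (∑ ω, if ∀ j : Fin n, j < k → ω j = lam j then prodM q ω else 0)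
        = ∏ j : Fin n, ∑ S, ((if j < k → S = lam j then (1 : ℝ) else 0) * q S) := by
      rw [Finset.sum_congr rfl (fun ω _ => factor_ind q k lam ω)]
      exact sum_prod_fn (fun j S => (if j < k → S = lam j then (1 : ℝ) else 0) * q S)
    have hcoord : ∀ j : Fin n, (∑ S, ((if j < k → S = lam j then (1 : ℝ) else 0) * q S))
        = if j < k then q (lam j) else 1 := by
      intro j
      by_cases hjk : j < k
      · rw [if_pos hjk]
        have heach : ∀ S : Finset (Fin m), ((if j < k → S = lam j then (1 : ℝ) else 0) * q S)
            = if S = lam j then q S else 0 := by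
          intro S
          by_cases hS : S = lam j
          · rw [if_pos (fun _ => hS), if_pos hS, one_mul]
          · rw [if_neg (fun himp => hS (himp hjk)), if_neg hS, zero_mul]
        rw [Finset.sum_congr rfl fun S _ => heach S, Finset.sum_ite_eq' univ (lam j) q]
        simp
      · rw [if_neg hjk]
        have heach : ∀ S : Finset (Fin m), ((if j < k → S = lam j then (1 : ℝ) else 0) * q S)
            = q S := by
          intro S
          rw [if_pos (fun h => absurd h hjk), one_mul]
        rw [Finset.sum_congr rfl fun S _ => heach S, hq1]
    have hcoord2 : ∀ j : Fin n, (∑ S, ((if j < k → S = lam j then (1 : ℝ) else 0)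
        * (if j = k then ell i S else 1) * q S))
        = if j = k then b i else if j < k then q (lam j) else 1 := by
      intro j
      by_cases hjk : j = k
      · subst hjk
        rw [if_pos rfl]
        have heach : ∀ S : Finset (Fin m), ((if j < j → S = lam j then (1 : ℝ) else 0)
            * (if j = j then ell i S else 1) * q S) = ell i S * q S := by
          intro S
          rw [if_pos (fun h => absurd h (lt_irrefl j)), if_pos rfl, one_mul]
        rw [Finset.sum_congr rfl fun S _ => heach S, hqm i]
      · rw [if_neg hjk]
        have heach : ∀ S : Finset (Fin m), ((if j < k → S = lam j then (1 : ℝ) else 0)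
            * (if j = k then ell i S else 1) * q S)
            = (if j < k → S = lam j then (1 : ℝ) else 0) * q S := by
          intro S; rw [if_neg hjk, mul_one]
        rw [Finset.sum_congr rfl fun S _ => heach S, hcoord j]
    rw [hL, hR, Finset.prod_congr rfl fun j _ => hcoord2 j,
      Finset.prod_congr rfl fun j _ => hcoord j,
      ← Finset.mul_prod_erase univ
        (fun j => if j = k then b i else if j < k then q (lam j) else 1) (Finset.mem_univ k),
      ← Finset.mul_prod_erase univ
        (fun j => if j < k then q (lam j) else 1) (Finset.mem_univ k),
      if_pos rfl, if_neg (lt_irrefl k)]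
    rw [Finset.prod_congr rfl
      (fun j hj => if_neg (Finset.ne_of_mem_erase hj) :
        ∀ j ∈ univ.erase k, (if j = k then b i else if j < k then q (lam j) else 1)
          = if j < k then q (lam j) else 1)]
    ring

lemma prefix_cons_iff {m n : ℕ} (k : Fin n) (S T : Finset (Fin m))
    (ω' lam' : Fin n → Finset (Fin m)) :
    (∀ j : Fin (n + 1), j < k.succ →
        (Fin.cons T ω' : Fin (n + 1) → Finset (Fin m)) j
          = (Fin.cons S lam' : Fin (n + 1) → Finset (Fin m)) j)
      ↔ (T = S ∧ ∀ j : Fin n, j < k → ω' j = lam' j) := by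
  constructor
  · intro h
    refine ⟨by simpa using h 0 (Fin.succ_pos k), fun j hj => ?_⟩
    simpa using h j.succ (by rwa [Fin.succ_lt_succ_iff])
  · rintro ⟨rfl, h⟩ j hj
    induction j using Fin.cases with
    | zero => simp
    | succ j' =>
        simp only [Fin.cons_succ]
        exact h j' (by rwa [Fin.succ_lt_succ_iff] at hj)

lemma marg_memM1 {m n : ℕ} (b : Fin m → ℝ) (x : (Fin (n + 1) → Finset (Fin m)) → ℝ)
    (hx : MemMn b x) :
    MemM1 b (fun S => ∑ ω' : Fin n → Finset (Fin m), x (Fin.cons S ω')) := by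
  obtain ⟨hx0, hx1, hxm⟩ := hx
  refine ⟨fun S => Finset.sum_nonneg fun ω' _ => hx0 _, ?_, ?_⟩
  · rw [← sum_cons x]; exact hx1
  · intro i
    have htriv : ∀ ω : Fin (n + 1) → Finset (Fin m),
        ∀ j : Fin (n + 1), j < (0 : Fin (n + 1)) → ω j = (fun _ => (∅ : Finset (Fin m))) j := by
      intro ω j hj
      exact absurd hj (by simp [Fin.lt_def])
    have h := hxm 0 (fun _ => ∅) i
    have e1 : (∑ ω : Fin (n + 1) → Finset (Fin m),
        if ∀ j : Fin (n + 1), j < (0 : Fin (n + 1)) → ω j = (fun _ => (∅ : Finset (Fin m))) j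
        then ell i (ω 0) * x ω else 0) = ∑ ω, ell i (ω 0) * x ω :=
      Finset.sum_congr rfl fun ω _ => if_pos (htriv ω)
    have e2 : (∑ ω : Fin (n + 1) → Finset (Fin m),
        if ∀ j : Fin (n + 1), j < (0 : Fin (n + 1)) → ω j = (fun _ => (∅ : Finset (Fin m))) j
        then x ω else 0) = ∑ ω, x ω :=
      Finset.sum_congr rfl fun ω _ => if_pos (htriv ω)
    rw [e1, e2, hx1, mul_one] at h
    rw [← h, sum_cons (fun ω => ell i (ω 0) * x ω)]
    refine Finset.sum_congr rfl fun S _ => ?_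
    rw [Finset.mul_sum]
    exact Finset.sum_congr rfl fun ω' _ => by rw [Fin.cons_zero]

lemma cond_memMn {m n : ℕ} (b : Fin m → ℝ) (x : (Fin (n + 1) → Finset (Fin m)) → ℝ)
    (hx : MemMn b x) (S : Finset (Fin m))
    (hpS : (∑ ω' : Fin n → Finset (Fin m), x (Fin.cons S ω')) ≠ 0) :
    MemMn b (fun ω' : Fin n → Finset (Fin m) =>
      x (Fin.cons S ω') / ∑ ω'' : Fin n → Finset (Fin m), x (Fin.cons S ω'')) := by
  obtain ⟨hx0, hx1, hxm⟩ := hx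
  refine ⟨fun ω' => div_nonneg (hx0 _) (Finset.sum_nonneg fun ω'' _ => hx0 _), ?_, ?_⟩
  · rw [← Finset.sum_div, div_self hpS]
  · intro k lam i
    have h := hxm k.succ (Fin.cons S lam) i
    rw [sum_cons (fun ω => if ∀ j : Fin (n + 1), j < k.succ → ω j = (Fin.cons S lam : Fin (n + 1) → Finset (Fin m)) j
        then ell i (ω k.succ) * x ω else 0),
      sum_cons (fun ω => if ∀ j : Fin (n + 1), j < k.succ → ω j = (Fin.cons S lam : Fin (n + 1) → Finset (Fin m)) j
        then x ω else 0)] at h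
    have e1 : ∀ T : Finset (Fin m),
        (∑ ω' : Fin n → Finset (Fin m),
          if ∀ j : Fin (n + 1), j < k.succ → (Fin.cons T ω' : Fin (n + 1) → Finset (Fin m)) j = (Fin.cons S lam : Fin (n + 1) → Finset (Fin m)) j
          then ell i ((Fin.cons T ω' : Fin (n + 1) → Finset (Fin m)) k.succ) * x (Fin.cons T ω') else 0)
        = if T = S then (∑ ω' : Fin n → Finset (Fin m),
            if ∀ j : Fin n, j < k → ω' j = lam j
            then ell i (ω' k) * x (Fin.cons T ω') else 0) else 0 := by
      intro T
      by_cases hTS : T = S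
      · rw [if_pos hTS]
        refine Finset.sum_congr rfl fun ω' _ => ?_
        by_cases hP : ∀ j : Fin n, j < k → ω' j = lam j
        · rw [if_pos ((prefix_cons_iff k S T ω' lam).mpr ⟨hTS, hP⟩), if_pos hP, Fin.cons_succ]
        · rw [if_neg (fun hc => hP ((prefix_cons_iff k S T ω' lam).mp hc).2), if_neg hP]
      · rw [if_neg hTS]
        refine Finset.sum_eq_zero fun ω' _ => ?_
        exact if_neg (fun hc => hTS ((prefix_cons_iff k S T ω' lam).mp hc).1)
    have e2 : ∀ T : Finset (Fin m),
        (∑ ω' : Fin n → Finset (Fin m),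
          if ∀ j : Fin (n + 1), j < k.succ → (Fin.cons T ω' : Fin (n + 1) → Finset (Fin m)) j = (Fin.cons S lam : Fin (n + 1) → Finset (Fin m)) j
          then x (Fin.cons T ω') else 0)
        = if T = S then (∑ ω' : Fin n → Finset (Fin m),
            if ∀ j : Fin n, j < k → ω' j = lam j
            then x (Fin.cons T ω') else 0) else 0 := by
      intro T
      by_cases hTS : T = S
      · rw [if_pos hTS]
        refine Finset.sum_congr rfl fun ω' _ => ?_
        by_cases hP : ∀ j : Fin n, j < k → ω' j = lam j
        · rw [if_pos ((prefix_cons_iff k S T ω' lam).mpr ⟨hTS, hP⟩), if_pos hP]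
        · rw [if_neg (fun hc => hP ((prefix_cons_iff k S T ω' lam).mp hc).2), if_neg hP]
      · rw [if_neg hTS]
        refine Finset.sum_eq_zero fun ω' _ => ?_
        exact if_neg (fun hc => hTS ((prefix_cons_iff k S T ω' lam).mp hc).1)
    rw [Finset.sum_congr rfl fun T _ => e1 T, Finset.sum_congr rfl fun T _ => e2 T,
      Finset.sum_ite_eq' univ S (fun T => ∑ ω' : Fin n → Finset (Fin m),
        if ∀ j : Fin n, j < k → ω' j = lam j then ell i (ω' k) * x (Fin.cons T ω') else 0),
      Finset.sum_ite_eq' univ S (fun T => ∑ ω' : Fin n → Finset (Fin m),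
        if ∀ j : Fin n, j < k → ω' j = lam j then x (Fin.cons T ω') else 0)] at h
    simp only [Finset.mem_univ, if_pos] at h
    have t1 : ∀ ω' : Fin n → Finset (Fin m),
        (if ∀ j : Fin n, j < k → ω' j = lam j
          then ell i (ω' k) * (x (Fin.cons S ω') / ∑ ω'' : Fin n → Finset (Fin m),
            x (Fin.cons S ω'')) else 0)
        = (if ∀ j : Fin n, j < k → ω' j = lam j then ell i (ω' k) * x (Fin.cons S ω') else 0)
            / ∑ ω'' : Fin n → Finset (Fin m), x (Fin.cons S ω'') := by
      intro ω'
      by_cases hP : ∀ j : Fin n, j < k → ω' j = lam j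
      · rw [if_pos hP, if_pos hP, mul_div_assoc]
      · rw [if_neg hP, if_neg hP, zero_div]
    have t2 : ∀ ω' : Fin n → Finset (Fin m),
        (if ∀ j : Fin n, j < k → ω' j = lam j
          then x (Fin.cons S ω') / ∑ ω'' : Fin n → Finset (Fin m), x (Fin.cons S ω'') else 0)
        = (if ∀ j : Fin n, j < k → ω' j = lam j then x (Fin.cons S ω') else 0)
            / ∑ ω'' : Fin n → Finset (Fin m), x (Fin.cons S ω'') := by
      intro ω'
      by_cases hP : ∀ j : Fin n, j < k → ω' j = lam j
      · rw [if_pos hP, if_pos hP]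
      · rw [if_neg hP, if_neg hP, zero_div]
    rw [Finset.sum_congr rfl fun ω' _ => t1 ω', Finset.sum_congr rfl fun ω' _ => t2 ω',
      ← Finset.sum_div, ← Finset.sum_div, h, mul_div_assoc]

lemma main_upper {m : ℕ} (b : Fin m → ℝ) (q : Finset (Fin m) → ℝ)
    (hq0 : ∀ S, 0 ≤ q S)
    (hstep : ∀ g : Finset (Fin m) → ℝ, Supermod g → ∀ p, MemM1 b p →
      ∑ S, g S * p S ≤ ∑ S, g S * q S) :
    ∀ (n : ℕ) (F : (Fin n → Finset (Fin m)) → ℝ), FibSupermod F →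
      ∀ x, MemMn b x → ∑ ω, F ω * x ω ≤ ∑ ω, F ω * prodM q ω := by
  intro n
  induction n with
  | zero =>
      intro F hF x hx
      have hx1 := hx.2.1
      rw [Fintype.sum_unique] at hx1
      rw [Fintype.sum_unique, Fintype.sum_unique, hx1, mul_one]
      simp [prodM]
  | succ n IH =>
      intro F hF x hx
      have hp : MemM1 b (fun S => ∑ ω' : Fin n → Finset (Fin m), x (Fin.cons S ω')) :=
        marg_memM1 b x hx
      set g : Finset (Fin m) → ℝ :=
        fun S => ∑ ω' : Fin n → Finset (Fin m), F (Fin.cons S ω') * prodM q ω' with hg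
      have hgsm : Supermod g := by
        intro A B
        simp only [hg]
        rw [← Finset.sum_add_distrib, ← Finset.sum_add_distrib]
        refine Finset.sum_le_sum fun ω' _ => ?_
        rw [← add_mul, ← add_mul]
        refine mul_le_mul_of_nonneg_right ?_ (Finset.prod_nonneg fun kk _ => hq0 _)
        have hsup := hF 0 (Fin.cons ∅ ω') A B
        simpa [Fin.update_cons_zero] using hsup
      have hterm : ∀ S : Finset (Fin m),
          (∑ ω' : Fin n → Finset (Fin m), F (Fin.cons S ω') * x (Fin.cons S ω'))
            ≤ (∑ ω' : Fin n → Finset (Fin m), x (Fin.cons S ω')) * g S := by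
        intro S
        by_cases hpS : (∑ ω' : Fin n → Finset (Fin m), x (Fin.cons S ω')) = 0
        · have hz : ∀ ω' : Fin n → Finset (Fin m), x (Fin.cons S ω') = 0 := fun ω' =>
            (Finset.sum_eq_zero_iff_of_nonneg (fun ω'' _ => hx.1 _)).mp hpS ω' (Finset.mem_univ _)
          have hzz : (∑ ω' : Fin n → Finset (Fin m), F (Fin.cons S ω') * x (Fin.cons S ω')) = 0 :=
            Finset.sum_eq_zero fun ω' _ => by rw [hz ω', mul_zero]
          rw [hzz, hpS, zero_mul]
        · have hFS : FibSupermod (fun ω' : Fin n → Finset (Fin m) => F (Fin.cons S ω')) := by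
            intro k lam A B
            have hsup := hF k.succ (Fin.cons S lam) A B
            simpa [Fin.cons_update] using hsup
          have hcond := cond_memMn b x hx S hpS
          have hIH := IH (fun ω' => F (Fin.cons S ω')) hFS _ hcond
          have heq : (∑ ω' : Fin n → Finset (Fin m), F (Fin.cons S ω')
              * (x (Fin.cons S ω') / ∑ ω'' : Fin n → Finset (Fin m), x (Fin.cons S ω'')))
              = (∑ ω' : Fin n → Finset (Fin m), F (Fin.cons S ω') * x (Fin.cons S ω'))
                / ∑ ω'' : Fin n → Finset (Fin m), x (Fin.cons S ω'') := by
            rw [Finset.sum_div]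
            exact Finset.sum_congr rfl fun ω' _ => by rw [mul_div_assoc]
          rw [heq] at hIH
          have hp0 : 0 ≤ (∑ ω' : Fin n → Finset (Fin m), x (Fin.cons S ω')) :=
            Finset.sum_nonneg fun ω' _ => hx.1 _
          calc (∑ ω' : Fin n → Finset (Fin m), F (Fin.cons S ω') * x (Fin.cons S ω'))
              = (∑ ω' : Fin n → Finset (Fin m), x (Fin.cons S ω'))
                * ((∑ ω' : Fin n → Finset (Fin m), F (Fin.cons S ω') * x (Fin.cons S ω'))
                  / ∑ ω'' : Fin n → Finset (Fin m), x (Fin.cons S ω'')) := by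
                rw [mul_comm, div_mul_cancel₀ _ hpS]
            _ ≤ (∑ ω' : Fin n → Finset (Fin m), x (Fin.cons S ω')) * g S :=
                mul_le_mul_of_nonneg_left hIH hp0
      calc ∑ ω, F ω * x ω
          = ∑ S, ∑ ω' : Fin n → Finset (Fin m), F (Fin.cons S ω') * x (Fin.cons S ω') :=
            sum_cons (fun ω => F ω * x ω)
        _ ≤ ∑ S, (∑ ω' : Fin n → Finset (Fin m), x (Fin.cons S ω')) * g S :=
            Finset.sum_le_sum fun S _ => hterm S
        _ = ∑ S, g S * (∑ ω' : Fin n → Finset (Fin m), x (Fin.cons S ω')) :=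
            Finset.sum_congr rfl fun S _ => mul_comm _ _
        _ ≤ ∑ S, g S * q S := hstep g hgsm _ hp
        _ = ∑ ω, F ω * prodM q ω := by
            rw [sum_cons (fun ω => F ω * prodM q ω)]
            refine Finset.sum_congr rfl fun S _ => ?_
            simp only [hg]
            rw [Finset.sum_mul]
            refine Finset.sum_congr rfl fun ω' _ => ?_
            rw [prodM_cons]
            ring

lemma main_lower {m : ℕ} (b : Fin m → ℝ) (q : Finset (Fin m) → ℝ)
    (hq0 : ∀ S, 0 ≤ q S)
    (hstep : ∀ g : Finset (Fin m) → ℝ, Supermod g → ∀ p, MemM1 b p →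
      ∑ S, g S * q S ≤ ∑ S, g S * p S) :
    ∀ (n : ℕ) (F : (Fin n → Finset (Fin m)) → ℝ), FibSupermod F →
      ∀ x, MemMn b x → ∑ ω, F ω * prodM q ω ≤ ∑ ω, F ω * x ω := by
  intro n
  induction n with
  | zero =>
      intro F hF x hx
      have hx1 := hx.2.1
      rw [Fintype.sum_unique] at hx1
      rw [Fintype.sum_unique, Fintype.sum_unique, hx1, mul_one]
      simp [prodM]
  | succ n IH =>
      intro F hF x hx
      have hp : MemM1 b (fun S => ∑ ω' : Fin n → Finset (Fin m), x (Fin.cons S ω')) :=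
        marg_memM1 b x hx
      set g : Finset (Fin m) → ℝ :=
        fun S => ∑ ω' : Fin n → Finset (Fin m), F (Fin.cons S ω') * prodM q ω' with hg
      have hgsm : Supermod g := by
        intro A B
        simp only [hg]
        rw [← Finset.sum_add_distrib, ← Finset.sum_add_distrib]
        refine Finset.sum_le_sum fun ω' _ => ?_
        rw [← add_mul, ← add_mul]
        refine mul_le_mul_of_nonneg_right ?_ (Finset.prod_nonneg fun kk _ => hq0 _)
        have hsup := hF 0 (Fin.cons ∅ ω') A B
        simpa [Fin.update_cons_zero] using hsup
      have hterm : ∀ S : Finset (Fin m),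
          (∑ ω' : Fin n → Finset (Fin m), x (Fin.cons S ω')) * g S
            ≤ ∑ ω' : Fin n → Finset (Fin m), F (Fin.cons S ω') * x (Fin.cons S ω') := by
        intro S
        by_cases hpS : (∑ ω' : Fin n → Finset (Fin m), x (Fin.cons S ω')) = 0
        · have hz : ∀ ω' : Fin n → Finset (Fin m), x (Fin.cons S ω') = 0 := fun ω' =>
            (Finset.sum_eq_zero_iff_of_nonneg (fun ω'' _ => hx.1 _)).mp hpS ω' (Finset.mem_univ _)
          have hzz : (∑ ω' : Fin n → Finset (Fin m), F (Fin.cons S ω') * x (Fin.cons S ω')) = 0 :=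
            Finset.sum_eq_zero fun ω' _ => by rw [hz ω', mul_zero]
          rw [hzz, hpS, zero_mul]
        · have hFS : FibSupermod (fun ω' : Fin n → Finset (Fin m) => F (Fin.cons S ω')) := by
            intro k lam A B
            have hsup := hF k.succ (Fin.cons S lam) A B
            simpa [Fin.cons_update] using hsup
          have hcond := cond_memMn b x hx S hpS
          have hIH := IH (fun ω' => F (Fin.cons S ω')) hFS _ hcond
          have heq : (∑ ω' : Fin n → Finset (Fin m), F (Fin.cons S ω')
              * (x (Fin.cons S ω') / ∑ ω'' : Fin n → Finset (Fin m), x (Fin.cons S ω'')))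
              = (∑ ω' : Fin n → Finset (Fin m), F (Fin.cons S ω') * x (Fin.cons S ω'))
                / ∑ ω'' : Fin n → Finset (Fin m), x (Fin.cons S ω'') := by
            rw [Finset.sum_div]
            exact Finset.sum_congr rfl fun ω' _ => by rw [mul_div_assoc]
          rw [heq] at hIH
          have hp0 : 0 ≤ (∑ ω' : Fin n → Finset (Fin m), x (Fin.cons S ω')) :=
            Finset.sum_nonneg fun ω' _ => hx.1 _
          calc (∑ ω' : Fin n → Finset (Fin m), x (Fin.cons S ω')) * g S
              ≤ (∑ ω' : Fin n → Finset (Fin m), x (Fin.cons S ω'))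
                * ((∑ ω' : Fin n → Finset (Fin m), F (Fin.cons S ω') * x (Fin.cons S ω'))
                  / ∑ ω'' : Fin n → Finset (Fin m), x (Fin.cons S ω'')) :=
                mul_le_mul_of_nonneg_left hIH hp0
            _ = ∑ ω' : Fin n → Finset (Fin m), F (Fin.cons S ω') * x (Fin.cons S ω') := by
                rw [mul_comm, div_mul_cancel₀ _ hpS]
      calc ∑ ω, F ω * prodM q ω
          = ∑ S, g S * q S := by
            rw [sum_cons (fun ω => F ω * prodM q ω)]
            refine Finset.sum_congr rfl fun S _ => ?_
            simp only [hg]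
            rw [Finset.sum_mul]
            refine Finset.sum_congr rfl fun ω' _ => ?_
            rw [prodM_cons]
            ring
        _ ≤ ∑ S, g S * (∑ ω' : Fin n → Finset (Fin m), x (Fin.cons S ω')) := hstep g hgsm _ hp
        _ = ∑ S, (∑ ω' : Fin n → Finset (Fin m), x (Fin.cons S ω')) * g S :=
            Finset.sum_congr rfl fun S _ => mul_comm _ _
        _ ≤ ∑ S, ∑ ω' : Fin n → Finset (Fin m), F (Fin.cons S ω') * x (Fin.cons S ω') :=
            Finset.sum_le_sum fun S _ => hterm S
        _ = ∑ ω, F ω * x ω := (sum_cons (fun ω => F ω * x ω)).symm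

/-- submodular version: for fibrewise submodular `f` (i.e. `−f` fibrewise
supermodular), the minimum over `M_n(b)` is attained at `(q*)^{⊗n}`, and if `Σ b_i ≤ 1`
the maximum is attained at `(q_*)^{⊗n}`. -/
theorem multi_step_submodular {m n : ℕ} (hm : 0 < m) (hn : 0 < n) (b : Fin m → ℝ)
    (hmono : ∀ i j : Fin m, i ≤ j → b j ≤ b i)
    (hb1 : ∀ i, b i ≤ 1) (hb0 : ∀ i, 0 ≤ b i)
    (f : (Fin n → Finset (Fin m)) → ℝ) (hf : FibSupermod fun ω => -f ω) :
    ((∀ x, MemMn b x → ∑ ω, f ω * prodM (qStar b) ω ≤ ∑ ω, f ω * x ω) ∧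
      IsLeast {r : ℝ | ∃ x, MemMn b x ∧ r = ∑ ω, f ω * x ω}
        (∑ ω, f ω * prodM (qStar b) ω)) ∧
    (∑ i, b i ≤ 1 →
      (∀ x, MemMn b x → ∑ ω, f ω * x ω ≤ ∑ ω, f ω * prodM (qLow b) ω) ∧
      IsGreatest {r : ℝ | ∃ x, MemMn b x ∧ r = ∑ ω, f ω * x ω}
        (∑ ω, f ω * prodM (qLow b) ω)) := by
  have hupp : ∀ x, MemMn b x → ∑ ω, f ω * prodM (qStar b) ω ≤ ∑ ω, f ω * x ω := by
    intro x hx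
    have h := main_upper b (qStar b) (qStar_nonneg hm b hmono hb1 hb0)
      (fun g hg p hp => step_upper b g hg p hp) n (fun ω => -f ω) hf x hx
    simp only [neg_mul] at h
    rw [Finset.sum_neg_distrib, Finset.sum_neg_distrib] at h
    linarith
  refine ⟨⟨hupp, ⟨⟨prodM (qStar b),
    memMn_prodM b (qStar b) (memM1_qStar hm b hmono hb1 hb0), rfl⟩, ?_⟩⟩, ?_⟩
  · rintro r ⟨x, hx, rfl⟩
    exact hupp x hx
  · intro hsum
    have hlow : ∀ x, MemMn b x → ∑ ω, f ω * x ω ≤ ∑ ω, f ω * prodM (qLow b) ω := by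
      intro x hx
      have h := main_lower b (qLow b) (qLow_nonneg b hb0 hsum)
        (fun g hg p hp => step_lower b g hg p hp) n (fun ω => -f ω) hf x hx
      simp only [neg_mul] at h
      rw [Finset.sum_neg_distrib, Finset.sum_neg_distrib] at h
      linarith
    refine ⟨hlow, ⟨⟨prodM (qLow b),
      memMn_prodM b (qLow b) (memM1_qLow b hb0 hsum), rfl⟩, ?_⟩⟩
    rintro r ⟨x, hx, rfl⟩
    exact hlow x hx
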